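/- Soundness of the bi-nested calculus C_LIK: if a bi-nested sequent S is provable in C_LIK, then S is valid, i.e. for every model M = (W,≤,R,V) based on a forward and downward confluent frame and every world x ∈ W, M, x ⊩ S. -/

import Mathlib

/-- Formulas of intuitionistic modal logic. -/
inductive Formula : Type where
  | atom : ℕ → Formula
  | top  : Formula
  | bot  : Formula
  | and  : Formula → Formula → Formula
  | or   : Formula → Formula → Formula
  | imp  : Formula → Formula → Formula
  | box  : Formula → Formula
  | dia  : Formula → Formula
deriving DecidableEq

/-- A model: a frame `(W, ≤, R)` together with a monotone valuation. -/
structure Model (W : Type) where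
  le : W → W → Prop
  rel : W → W → Prop
  val : ℕ → W → Prop
  le_refl : ∀ x, le x x
  le_trans : ∀ x y z, le x y → le y z → le x z
  val_mono : ∀ p x y, le x y → val p x → val p y

/-- Forward confluence: `x ≤ x'` and `R x y` yield `y'` with `R x' y'` and `y ≤ y'`. -/
def ForwardConfluent {W : Type} (M : Model W) : Prop :=
  ∀ x x' y, M.le x x' → M.rel x y → ∃ y', M.rel x' y' ∧ M.le y y'

/-- Downward confluence: `x ≤ x'` and `R x' y'` yield `y` with `R x y` and `y ≤ y'`. -/
def DownwardConfluent {W : Type} (M : Model W) : Prop :=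
  ∀ x x' y', M.le x x' → M.rel x' y' → ∃ y, M.rel x y ∧ M.le y y'

/-- The local forcing relation. -/
def Force {W : Type} (M : Model W) : W → Formula → Prop
  | x, .atom p => M.val p x
  | _, .top => True
  | _, .bot => False
  | x, .and A B => Force M x A ∧ Force M x B
  | x, .or A B => Force M x A ∨ Force M x B
  | x, .imp A B => ∀ y, M.le x y → Force M y A → Force M y B
  | x, .box A => ∀ y, M.rel x y → Force M y A
  | x, .dia A => ∃ y, M.rel x y ∧ Force M y A

/-- Elements of the succedent of a bi-nested sequent: formulas, implication
blocks `⟨Γ ⇒ Δ⟩` and modal blocks `[Γ ⇒ Δ]`.  A sequent `Γ ⇒ Δ` is a pair of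
a list of formulas and a list of succedent elements (lists are considered up
to (deep) permutation, i.e. as multisets, via the `perm` rule below). -/
inductive Delem : Type where
  | fml : Formula → Delem
  | impB : List Formula → List Delem → Delem
  | modB : List Formula → List Delem → Delem


abbrev Sequent := List Formula × List Delem

/-- Contexts: a sequent with a hole reachable through nested blocks. -/
inductive Ctx : Type where
  | hole : Ctx
  | imp : List Formula → List Delem → Ctx → Ctx
  | mod : List Formula → List Delem → Ctx → Ctx

/-- Filling the hole of a context with a sequent. -/
def Ctx.fill : Ctx → Sequent → Sequent
  | .hole, S => S
  | .imp Γ Δ C, S => (Γ, Delem.impB (Ctx.fill C S).1 (Ctx.fill C S).2 :: Δ)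
  | .mod Γ Δ C, S => (Γ, Delem.modB (Ctx.fill C S).1 (Ctx.fill C S).2 :: Δ)

/-- The `♭` operator on succedents: keep only the modal blocks, recursively
flattening their succedents. -/
def flatOp : List Delem → List Delem
  | [] => []
  | Delem.modB Φ Ψ :: rest => Delem.modB Φ (flatOp Ψ) :: flatOp rest
  | Delem.fml _ :: rest => flatOp rest
  | Delem.impB _ _ :: rest => flatOp rest

/-- The `#` operator on succedents: keep the top-level formulas, replace each
modal block `[Φ ⇒ Ψ]` by `[⇒ Ψ^#]`, drop implication blocks. -/
def sharpOp : List Delem → List Delem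
  | [] => []
  | Delem.fml A :: rest => Delem.fml A :: sharpOp rest
  | Delem.impB _ _ :: rest => sharpOp rest
  | Delem.modB _ Ψ :: rest => Delem.modB [] (sharpOp Ψ) :: sharpOp rest

mutual
/-- Deep equality-up-to-permutation of succedent elements. -/
inductive DEquiv : Delem → Delem → Prop where
  | fml (A : Formula) : DEquiv (Delem.fml A) (Delem.fml A)
  | impB {Γ Γ' : List Formula} {Δ Δ' : List Delem} :
      List.Perm Γ Γ' → LEquiv Δ Δ' → DEquiv (Delem.impB Γ Δ) (Delem.impB Γ' Δ')
  | modB {Γ Γ' : List Formula} {Δ Δ' : List Delem} :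
      List.Perm Γ Γ' → LEquiv Δ Δ' → DEquiv (Delem.modB Γ Δ) (Delem.modB Γ' Δ')

/-- Deep permutation of lists of succedent elements. -/
inductive LEquiv : List Delem → List Delem → Prop where
  | nil : LEquiv [] []
  | cons {a b : Delem} {l₁ l₂ : List Delem} :
      DEquiv a b → LEquiv l₁ l₂ → LEquiv (a :: l₁) (b :: l₂)
  | swap (a b : Delem) (l : List Delem) : LEquiv (a :: b :: l) (b :: a :: l)
  | trans {l₁ l₂ l₃ : List Delem} : LEquiv l₁ l₂ → LEquiv l₂ l₃ → LEquiv l₁ l₃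
end

/-- Two sequents are the same "multiset sequent". -/
def SeqEquiv (S T : Sequent) : Prop := List.Perm S.1 T.1 ∧ LEquiv S.2 T.2

/-- Which optional rules are present in the calculus. -/
structure CalcRules where
  interDown : Bool
  dRule : Bool
  tRule : Bool

/-- The bi-nested calculi.  `Prf ⟨true, false, false⟩` is C_LIK,
`Prf ⟨false, false, false⟩` is C_LIK⁻ (no (inter↓)),
`Prf ⟨false, true, false⟩` is C_LIKD⁻ and `Prf ⟨false, false, true⟩` is
C_LIKT⁻.  Sequents are lists-based; the rule `perm` identifies sequents that
are equal as (nested) multisets. -/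
inductive Prf (R : CalcRules) : Sequent → Prop where
  | botL (G : Ctx) (Γ : List Formula) (Δ : List Delem) :
      Prf R (G.fill (Formula.bot :: Γ, Δ))
  | topR (G : Ctx) (Γ : List Formula) (Δ : List Delem) :
      Prf R (G.fill (Γ, Delem.fml Formula.top :: Δ))
  | id (G : Ctx) (Γ : List Formula) (Δ : List Delem) (p : ℕ) :
      Prf R (G.fill (Formula.atom p :: Γ, Delem.fml (Formula.atom p) :: Δ))
  | andL (G : Ctx) (Γ : List Formula) (Δ : List Delem) (A B : Formula) :
      Prf R (G.fill (A :: B :: Γ, Δ)) → Prf R (G.fill (Formula.and A B :: Γ, Δ))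
  | andR (G : Ctx) (Γ : List Formula) (Δ : List Delem) (A B : Formula) :
      Prf R (G.fill (Γ, Delem.fml A :: Δ)) → Prf R (G.fill (Γ, Delem.fml B :: Δ)) →
      Prf R (G.fill (Γ, Delem.fml (Formula.and A B) :: Δ))
  | orL (G : Ctx) (Γ : List Formula) (Δ : List Delem) (A B : Formula) :
      Prf R (G.fill (A :: Γ, Δ)) → Prf R (G.fill (B :: Γ, Δ)) →
      Prf R (G.fill (Formula.or A B :: Γ, Δ))
  | orR (G : Ctx) (Γ : List Formula) (Δ : List Delem) (A B : Formula) :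
      Prf R (G.fill (Γ, Delem.fml A :: Delem.fml B :: Δ)) →
      Prf R (G.fill (Γ, Delem.fml (Formula.or A B) :: Δ))
  | impL (G : Ctx) (Γ : List Formula) (Δ : List Delem) (A B : Formula) :
      Prf R (G.fill (Formula.imp A B :: Γ, Delem.fml A :: Δ)) →
      Prf R (G.fill (B :: Γ, Δ)) →
      Prf R (G.fill (Formula.imp A B :: Γ, Δ))
  | impR (G : Ctx) (Γ : List Formula) (Δ : List Delem) (A B : Formula) :
      Prf R (G.fill (Γ, Delem.impB [A] [Delem.fml B] :: Δ)) →
      Prf R (G.fill (Γ, Delem.fml (Formula.imp A B) :: Δ))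
  | boxL (G : Ctx) (Γ : List Formula) (Δ : List Delem) (A : Formula)
      (Ss : List Formula) (Ps : List Delem) :
      Prf R (G.fill (Formula.box A :: Γ, Delem.modB (A :: Ss) Ps :: Δ)) →
      Prf R (G.fill (Formula.box A :: Γ, Delem.modB Ss Ps :: Δ))
  | boxR (G : Ctx) (Γ : List Formula) (Δ : List Delem) (A : Formula) :
      Prf R (G.fill (Γ, Delem.modB [] [Delem.fml A] :: Δ)) →
      Prf R (G.fill (Γ, Delem.fml (Formula.box A) :: Δ))
  | diaL (G : Ctx) (Γ : List Formula) (Δ : List Delem) (A : Formula) :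
      Prf R (G.fill (Γ, Delem.modB [A] [] :: Δ)) →
      Prf R (G.fill (Formula.dia A :: Γ, Δ))
  | diaR (G : Ctx) (Γ : List Formula) (Δ : List Delem) (A : Formula)
      (Ss : List Formula) (Ps : List Delem) :
      Prf R (G.fill (Γ, Delem.fml (Formula.dia A) :: Delem.modB Ss (Delem.fml A :: Ps) :: Δ)) →
      Prf R (G.fill (Γ, Delem.fml (Formula.dia A) :: Delem.modB Ss Ps :: Δ))
  | transR (G : Ctx) (Γ Γ' : List Formula) (Δ : List Delem)
      (Ss : List Formula) (Ps : List Delem) :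
      Prf R (G.fill (Γ' ++ Γ, Delem.impB (Γ' ++ Ss) Ps :: Δ)) →
      Prf R (G.fill (Γ' ++ Γ, Delem.impB Ss Ps :: Δ))
  | interF (G : Ctx) (Γ : List Formula) (Δ : List Delem)
      (Ss : List Formula) (Ps : List Delem) (Ls : List Formula) (Θ : List Delem) :
      Prf R (G.fill (Γ, Delem.impB Ss (Delem.modB Ls (flatOp Θ) :: Ps) :: Delem.modB Ls Θ :: Δ)) →
      Prf R (G.fill (Γ, Delem.impB Ss Ps :: Delem.modB Ls Θ :: Δ))
  | interD (G : Ctx) (Γ : List Formula) (Δ : List Delem)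
      (Ss : List Formula) (Ps : List Delem) (Ls : List Formula) (Θ : List Delem) :
      R.interDown = true →
      Prf R (G.fill (Γ, Delem.impB Ss (Delem.modB Ls Θ :: Ps) :: Delem.modB [] (sharpOp Θ) :: Δ)) →
      Prf R (G.fill (Γ, Delem.impB Ss (Delem.modB Ls Θ :: Ps) :: Δ))
  | dRule (G : Ctx) (Γ : List Formula) (Δ : List Delem) :
      R.dRule = true →
      Prf R (G.fill (Γ, Delem.modB [] [] :: Δ)) → Prf R (G.fill (Γ, Δ))
  | tBox (G : Ctx) (Γ : List Formula) (Δ : List Delem) (A : Formula) :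
      R.tRule = true →
      Prf R (G.fill (Formula.box A :: A :: Γ, Δ)) → Prf R (G.fill (Formula.box A :: Γ, Δ))
  | tDia (G : Ctx) (Γ : List Formula) (Δ : List Delem) (A : Formula) :
      R.tRule = true →
      Prf R (G.fill (Γ, Delem.fml (Formula.dia A) :: Delem.fml A :: Δ)) →
      Prf R (G.fill (Γ, Delem.fml (Formula.dia A) :: Δ))
  | perm (S T : Sequent) : SeqEquiv S T → Prf R S → Prf R T

mutual
/-- Forcing of succedent elements at a world. -/
def ForceD {W : Type} (M : Model W) : W → Delem → Prop
  | x, .fml A => Force M x A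
  | x, .impB Γ Δ => ∀ y, M.le x y → ((∃ A ∈ Γ, ¬ Force M y A) ∨ ForceAny M y Δ)
  | x, .modB Γ Δ => ∀ y, M.rel x y → ((∃ A ∈ Γ, ¬ Force M y A) ∨ ForceAny M y Δ)

/-- Some element of the list is forced. -/
def ForceAny {W : Type} (M : Model W) : W → List Delem → Prop
  | _, [] => False
  | x, d :: ds => ForceD M x d ∨ ForceAny M x ds
end

/-- Forcing of a sequent: some antecedent formula fails or some succedent
element is forced. -/
def ForceSeq {W : Type} (M : Model W) (x : W) (S : Sequent) : Prop :=
  (∃ A ∈ S.1, ¬ Force M x A) ∨ ForceAny M x S.2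


/-!
Every rule is locally sound: a world forcing the premises forces the conclusion. This lifts
through contexts, since blocks `⟨T⟩` and `[T]` quantify over `≤`- and `R`-successors. The
confluence conditions give persistence of forcing along `≤` (forward confluence for `◇`,
downward for `□`), which (trans) needs, and the two facts behind the interaction rules:
`Θ♭` forced at a `≤`-successor of `z` gives `Θ` at `z`, and `Θ^#` forced at `w` gives `Θ` at
every `≤`-successor of `w`.
-/

section Semantics

variable {W : Type} {M : Model W} {x : W}

theorem force_mono (fc : ForwardConfluent M) (dc : DownwardConfluent M) :
    ∀ (A : Formula) {x y : W}, M.le x y → Force M x A → Force M y A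
  | .atom p, _, _, hxy, hx => M.val_mono p _ _ hxy hx
  | .top, _, _, _, _ => trivial
  | .and A B, _, _, hxy, ⟨hA, hB⟩ => ⟨force_mono fc dc A hxy hA, force_mono fc dc B hxy hB⟩
  | .or A _, _, _, hxy, .inl hA => .inl (force_mono fc dc A hxy hA)
  | .or _ B, _, _, hxy, .inr hB => .inr (force_mono fc dc B hxy hB)
  | .imp _ _, _, _, hxy, hx => fun z hyz => hx z (M.le_trans _ _ _ hxy hyz)
  | .box A, x, y, hxy, hx => fun y' hyy' => by
      obtain ⟨x', hxx', hx'y'⟩ := dc x y y' hxy hyy'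
      exact force_mono fc dc A hx'y' (hx x' hxx')
  | .dia A, x, y, hxy, ⟨x', hxx', hA⟩ => by
      obtain ⟨y', hyy', hx'y'⟩ := fc x y x' hxy hxx'
      exact ⟨y', hyy', force_mono fc dc A hx'y' hA⟩

@[simp]
theorem forceAny_nil : ¬ ForceAny M x [] := id

@[simp]
theorem forceAny_cons {d : Delem} {Δ : List Delem} :
    ForceAny M x (d :: Δ) ↔ ForceD M x d ∨ ForceAny M x Δ := Iff.rfl

theorem forceSeq_iff {Γ : List Formula} {Δ : List Delem} :
    ForceSeq M x (Γ, Δ) ↔ ((∀ A ∈ Γ, Force M x A) → ForceAny M x Δ) := by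
  simp only [ForceSeq, or_iff_not_imp_left, not_exists, not_and, not_not]

@[simp]
theorem forceD_fml {A : Formula} : ForceD M x (.fml A) ↔ Force M x A := Iff.rfl

@[simp]
theorem forceD_impB {Γ : List Formula} {Δ : List Delem} :
    ForceD M x (.impB Γ Δ) ↔ ∀ y, M.le x y → ForceSeq M y (Γ, Δ) := Iff.rfl

@[simp]
theorem forceD_modB {Γ : List Formula} {Δ : List Delem} :
    ForceD M x (.modB Γ Δ) ↔ ∀ y, M.rel x y → ForceSeq M y (Γ, Δ) := Iff.rfl

theorem LEquiv.forceAny_iff {l₁ l₂ : List Delem} (h : LEquiv l₁ l₂) :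
    ∀ x : W, ForceAny M x l₁ ↔ ForceAny M x l₂ := by
  have perm_congr {Γ Γ' : List Formula} (hΓ : Γ.Perm Γ') {Δ Δ' : List Delem}
      (hΔ : ∀ y : W, ForceAny M y Δ ↔ ForceAny M y Δ') (y : W) :
      ForceSeq M y (Γ, Δ) ↔ ForceSeq M y (Γ', Δ') := by
    simp only [forceSeq_iff, hΓ.mem_iff, hΔ]
  refine LEquiv.rec (motive_1 := fun a b _ => ∀ x : W, ForceD M x a ↔ ForceD M x b)
    (motive_2 := fun l₁ l₂ _ => ∀ x : W, ForceAny M x l₁ ↔ ForceAny M x l₂)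
    (fun _ _ => Iff.rfl) ?impB ?modB (fun _ => Iff.rfl) ?cons ?swap ?trans h
  case impB | modB =>
    intro _ _ _ _ hΓ _ hΔ x
    simp only [forceD_impB, forceD_modB, perm_congr hΓ hΔ]
  case cons => exact fun _ _ hab hl x => or_congr (hab x) (hl x)
  case swap => exact fun _ _ _ _ => or_left_comm
  case trans => exact fun _ _ h₁₂ h₂₃ x => (h₁₂ x).trans (h₂₃ x)

theorem SeqEquiv.forceSeq_iff {S T : Sequent} (h : SeqEquiv S T) (x : W) :
    ForceSeq M x S ↔ ForceSeq M x T := by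
  obtain ⟨Γ, Δ⟩ := S
  obtain ⟨Γ', Δ'⟩ := T
  simp only [_root_.forceSeq_iff, h.1.mem_iff, h.2.forceAny_iff x]

end Semantics

section Operators

variable {W : Type} {M : Model W} (fc : ForwardConfluent M) (dc : DownwardConfluent M)
include fc dc

theorem forceAny_of_le_of_forceAny_flatOp (Θ : List Delem) {z z' : W} (hz : M.le z z')
    (h : ForceAny M z' (flatOp Θ)) : ForceAny M z Θ := by
  induction Θ using flatOp.induct generalizing z z' with
  | case1 => simp [flatOp] at h
  | case2 Λ Ψ Θ ihΨ ihΘ =>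
    simp only [flatOp, forceAny_cons, forceD_modB] at h ⊢
    refine h.imp (fun hΨ w hzw => ?_) (ihΘ hz)
    obtain ⟨w', hz'w', hww'⟩ := fc z z' w hz hzw
    have hΨw' := hΨ w' hz'w'
    rw [forceSeq_iff] at hΨw' ⊢
    exact fun hΛ => ihΨ hww' (hΨw' fun A hA => force_mono fc dc A hww' (hΛ A hA))
  | case3 _ _ ih | case4 _ _ _ ih =>
    rw [flatOp] at h
    exact .inr (ih hz h)

theorem forceAny_of_le_of_forceAny_sharpOp (Θ : List Delem) {w z : W} (hwz : M.le w z)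
    (h : ForceAny M w (sharpOp Θ)) : ForceAny M z Θ := by
  induction Θ using sharpOp.induct generalizing w z with
  | case1 => simp [sharpOp] at h
  | case2 A Θ ih =>
    simp only [sharpOp, forceAny_cons, forceD_fml] at h ⊢
    exact h.imp (force_mono fc dc A hwz) (ih hwz)
  | case3 _ _ _ ih =>
    rw [sharpOp] at h
    exact .inr (ih hwz h)
  | case4 Φ Ψ Θ ihΨ ihΘ =>
    simp only [sharpOp, forceAny_cons, forceD_modB] at h ⊢
    refine h.imp (fun hΨ u hzu => ?_) (ihΘ hwz)
    obtain ⟨v, hwv, hvu⟩ := dc w z u hwz hzu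
    have hΨv := hΨ v hwv
    rw [forceSeq_iff] at hΨv ⊢
    exact fun _ => ihΨ hvu (hΨv (by simp))

end Operators

section Contexts

variable {W : Type} {M : Model W}

theorem forceSeq_cons_of_forall_forceSeq {ι : Type} {x : W} {Γ : List Formula} {Δ : List Delem}
    {d : ι → Delem} {e : Delem} (hde : (∀ i, ForceD M x (d i)) → ForceD M x e)
    (h : ∀ i, ForceSeq M x (Γ, d i :: Δ)) : ForceSeq M x (Γ, e :: Δ) := by
  simp only [forceSeq_iff, forceAny_cons] at h ⊢
  intro hΓ
  by_cases hΔ : ForceAny M x Δ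
  · exact .inr hΔ
  · exact .inl (hde fun i => ((h i) hΓ).resolve_right hΔ)

theorem Ctx.forceSeq_fill {ι : Type} {P : ι → Sequent} {C : Sequent}
    (hC : ∀ x : W, (∀ i, ForceSeq M x (P i)) → ForceSeq M x C) :
    ∀ (G : Ctx) (x : W), (∀ i, ForceSeq M x (G.fill (P i))) → ForceSeq M x (G.fill C)
  | .hole, x, h => hC x h
  | .imp _ _ G, _, h =>
    forceSeq_cons_of_forall_forceSeq (d := fun i => .impB (G.fill (P i)).1 (G.fill (P i)).2)
      (fun hP y hxy => G.forceSeq_fill hC y (hP · y hxy)) h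
  | .mod _ _ G, _, h =>
    forceSeq_cons_of_forall_forceSeq (d := fun i => .modB (G.fill (P i)).1 (G.fill (P i)).2)
      (fun hP y hxy => G.forceSeq_fill hC y (hP · y hxy)) h

theorem Ctx.forceSeq_fill_of_forall {S : Sequent} (hS : ∀ x : W, ForceSeq M x S) (G : Ctx)
    (x : W) : ForceSeq M x (G.fill S) :=
  G.forceSeq_fill (P := Empty.elim) (fun x _ => hS x) x nofun

theorem Ctx.forceSeq_fill_of_imp {P C : Sequent}
    (hC : ∀ x : W, ForceSeq M x P → ForceSeq M x C) (G : Ctx) (x : W)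
    (hP : ForceSeq M x (G.fill P)) : ForceSeq M x (G.fill C) :=
  G.forceSeq_fill (P := fun _ : Unit => P) (fun x h => hC x (h ())) x fun _ => hP

theorem Ctx.forceSeq_fill_of_imp₂ {P₁ P₂ C : Sequent}
    (hC : ∀ x : W, ForceSeq M x P₁ → ForceSeq M x P₂ → ForceSeq M x C) (G : Ctx) (x : W)
    (hP₁ : ForceSeq M x (G.fill P₁)) (hP₂ : ForceSeq M x (G.fill P₂)) :
    ForceSeq M x (G.fill C) :=
  G.forceSeq_fill (P := fun b => cond b P₁ P₂) (fun x h => hC x (h true) (h false)) x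
    fun | true => hP₁ | false => hP₂

end Contexts

section LocalSoundness

variable {W : Type} {M : Model W} {x : W} {Γ Γ' Ss Ls : List Formula} {Δ Ps Θ : List Delem}
  {A B : Formula}

theorem forceSeq_botL : ForceSeq M x (.bot :: Γ, Δ) := by
  simp [forceSeq_iff, Force]

theorem forceSeq_topR : ForceSeq M x (Γ, .fml .top :: Δ) := by
  simp [forceSeq_iff, Force]

theorem forceSeq_id (p : ℕ) : ForceSeq M x (.atom p :: Γ, .fml (.atom p) :: Δ) := by
  simp +contextual [forceSeq_iff]

theorem forceSeq_andL (h : ForceSeq M x (A :: B :: Γ, Δ)) :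
    ForceSeq M x (.and A B :: Γ, Δ) := by
  simpa [forceSeq_iff, Force] using h

theorem forceSeq_andR (h₁ : ForceSeq M x (Γ, .fml A :: Δ))
    (h₂ : ForceSeq M x (Γ, .fml B :: Δ)) :
    ForceSeq M x (Γ, .fml (.and A B) :: Δ) := by
  simp only [forceSeq_iff, forceAny_cons, forceD_fml] at *
  exact fun hΓ => (h₁ hΓ).elim (fun hA => (h₂ hΓ).imp (⟨hA, ·⟩) id) .inr

theorem forceSeq_orL (h₁ : ForceSeq M x (A :: Γ, Δ)) (h₂ : ForceSeq M x (B :: Γ, Δ)) :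
    ForceSeq M x (.or A B :: Γ, Δ) := by
  simp only [forceSeq_iff, List.forall_mem_cons] at *
  exact fun ⟨hAB, hΓ⟩ => hAB.elim (h₁ ⟨·, hΓ⟩) (h₂ ⟨·, hΓ⟩)

theorem forceSeq_orR (h : ForceSeq M x (Γ, .fml A :: .fml B :: Δ)) :
    ForceSeq M x (Γ, .fml (.or A B) :: Δ) := by
  simpa [forceSeq_iff, Force, or_assoc] using h

theorem forceSeq_impL (h₁ : ForceSeq M x (.imp A B :: Γ, .fml A :: Δ))
    (h₂ : ForceSeq M x (B :: Γ, Δ)) : ForceSeq M x (.imp A B :: Γ, Δ) := by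
  simp only [forceSeq_iff, List.forall_mem_cons, forceAny_cons, forceD_fml] at *
  exact fun ⟨hAB, hΓ⟩ =>
    (h₁ ⟨hAB, hΓ⟩).elim (fun hA => h₂ ⟨hAB x (M.le_refl x) hA, hΓ⟩) id

theorem forceSeq_impR (h : ForceSeq M x (Γ, .impB [A] [.fml B] :: Δ)) :
    ForceSeq M x (Γ, .fml (.imp A B) :: Δ) := by
  simpa [forceSeq_iff, Force] using h

theorem forceSeq_boxL (h : ForceSeq M x (.box A :: Γ, .modB (A :: Ss) Ps :: Δ)) :
    ForceSeq M x (.box A :: Γ, .modB Ss Ps :: Δ) := by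
  simp only [forceSeq_iff, List.forall_mem_cons, forceAny_cons, forceD_modB] at *
  exact fun ⟨hA, hΓ⟩ =>
    (h ⟨hA, hΓ⟩).imp_left fun hSs y hxy => hSs y hxy ∘ And.intro (hA y hxy)

theorem forceSeq_boxR (h : ForceSeq M x (Γ, .modB [] [.fml A] :: Δ)) :
    ForceSeq M x (Γ, .fml (.box A) :: Δ) := by
  simpa [forceSeq_iff, Force] using h

theorem forceSeq_diaL (h : ForceSeq M x (Γ, .modB [A] [] :: Δ)) :
    ForceSeq M x (.dia A :: Γ, Δ) := by
  simp only [forceSeq_iff, List.forall_mem_cons, forceAny_cons, forceD_modB] at *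
  exact fun ⟨⟨y, hxy, hA⟩, hΓ⟩ =>
    (h hΓ).resolve_left fun hA' => forceAny_nil (hA' y hxy (by simpa using hA))

theorem forceSeq_diaR (h : ForceSeq M x (Γ, .fml (.dia A) :: .modB Ss (.fml A :: Ps) :: Δ)) :
    ForceSeq M x (Γ, .fml (.dia A) :: .modB Ss Ps :: Δ) := by
  simp only [forceSeq_iff, forceAny_cons, forceD_fml, forceD_modB] at *
  intro hΓ
  rcases h hΓ with hdia | hSs | hΔ
  · exact .inl hdia
  · by_cases hPs : ∀ y, M.rel x y → (∀ A ∈ Ss, Force M y A) → ForceAny M y Ps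
    · exact .inr (.inl hPs)
    · simp only [not_forall] at hPs
      obtain ⟨y, hxy, hSsy, hnPs⟩ := hPs
      exact .inl ⟨y, hxy, (hSs y hxy hSsy).resolve_right hnPs⟩
  · exact .inr (.inr hΔ)

variable (fc : ForwardConfluent M) (dc : DownwardConfluent M)
include fc dc

theorem forceSeq_transR (h : ForceSeq M x (Γ' ++ Γ, .impB (Γ' ++ Ss) Ps :: Δ)) :
    ForceSeq M x (Γ' ++ Γ, .impB Ss Ps :: Δ) := by
  simp only [forceSeq_iff, List.forall_mem_append, forceAny_cons, forceD_impB] at *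
  exact fun hΓ => (h hΓ).imp_left fun hPs y hxy hSs =>
    hPs y hxy ⟨fun A hA => force_mono fc dc A hxy (hΓ.1 A hA), hSs⟩

theorem forceSeq_interF
    (h : ForceSeq M x (Γ, .impB Ss (.modB Ls (flatOp Θ) :: Ps) :: .modB Ls Θ :: Δ)) :
    ForceSeq M x (Γ, .impB Ss Ps :: .modB Ls Θ :: Δ) := by
  have hflat {y} (hxy : M.le x y) (hy : ForceD M y (.modB Ls (flatOp Θ))) :
      ForceD M x (.modB Ls Θ) := by
    -- `flatOp [[Ls ⇒ Θ]] = [[Ls ⇒ Θ♭]]`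
    simpa using
      forceAny_of_le_of_forceAny_flatOp fc dc [.modB Ls Θ] hxy (by simpa [flatOp] using hy)
  simp only [forceSeq_iff, forceAny_cons] at h ⊢
  intro hΓ
  by_cases hΘ : ForceD M x (.modB Ls Θ)
  · exact .inr (.inl hΘ)
  · refine (h hΓ).imp_left fun hSs => forceD_impB.mpr fun y hxy => ?_
    have hSsy := forceD_impB.mp hSs y hxy
    simp only [forceSeq_iff, forceAny_cons] at hSsy ⊢
    exact fun hSs' => (hSsy hSs').resolve_left (hΘ ∘ hflat hxy)

theorem forceSeq_interD
    (h : ForceSeq M x (Γ, .impB Ss (.modB Ls Θ :: Ps) :: .modB [] (sharpOp Θ) :: Δ)) :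
    ForceSeq M x (Γ, .impB Ss (.modB Ls Θ :: Ps) :: Δ) := by
  have hsharp (hx : ForceD M x (.modB [] (sharpOp Θ))) :
      ForceD M x (.impB Ss (.modB Ls Θ :: Ps)) := forceD_impB.mpr fun y hxy => by
    have hy := forceAny_of_le_of_forceAny_sharpOp fc dc [.modB Ls Θ] hxy
      (by simpa [sharpOp] using hx)
    rw [forceSeq_iff]
    exact fun _ => .inl (hy.resolve_right forceAny_nil)
  simp only [forceSeq_iff, forceAny_cons] at h ⊢
  exact fun hΓ => (h hΓ).elim .inl (·.imp_left hsharp)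

end LocalSoundness

theorem Prf.forceSeq {W : Type} {M : Model W} (fc : ForwardConfluent M) (dc : DownwardConfluent M)
    {R : CalcRules} (hD : R.dRule = false) (hT : R.tRule = false) {S : Sequent} (h : Prf R S)
    (x : W) : ForceSeq M x S := by
  induction h generalizing x with
  | botL G => exact G.forceSeq_fill_of_forall (fun _ => forceSeq_botL) x
  | topR G => exact G.forceSeq_fill_of_forall (fun _ => forceSeq_topR) x
  | id G _ _ p => exact G.forceSeq_fill_of_forall (fun _ => forceSeq_id p) x
  | andL G _ _ _ _ _ ih => exact G.forceSeq_fill_of_imp (fun _ => forceSeq_andL) x (ih x)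
  | andR G _ _ _ _ _ _ ih₁ ih₂ =>
    exact G.forceSeq_fill_of_imp₂ (fun _ => forceSeq_andR) x (ih₁ x) (ih₂ x)
  | orL G _ _ _ _ _ _ ih₁ ih₂ =>
    exact G.forceSeq_fill_of_imp₂ (fun _ => forceSeq_orL) x (ih₁ x) (ih₂ x)
  | orR G _ _ _ _ _ ih => exact G.forceSeq_fill_of_imp (fun _ => forceSeq_orR) x (ih x)
  | impL G _ _ _ _ _ _ ih₁ ih₂ =>
    exact G.forceSeq_fill_of_imp₂ (fun _ => forceSeq_impL) x (ih₁ x) (ih₂ x)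
  | impR G _ _ _ _ _ ih => exact G.forceSeq_fill_of_imp (fun _ => forceSeq_impR) x (ih x)
  | boxL G _ _ _ _ _ _ ih => exact G.forceSeq_fill_of_imp (fun _ => forceSeq_boxL) x (ih x)
  | boxR G _ _ _ _ ih => exact G.forceSeq_fill_of_imp (fun _ => forceSeq_boxR) x (ih x)
  | diaL G _ _ _ _ ih => exact G.forceSeq_fill_of_imp (fun _ => forceSeq_diaL) x (ih x)
  | diaR G _ _ _ _ _ _ ih => exact G.forceSeq_fill_of_imp (fun _ => forceSeq_diaR) x (ih x)
  | transR G _ _ _ _ _ _ ih =>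
    exact G.forceSeq_fill_of_imp (fun _ => forceSeq_transR fc dc) x (ih x)
  | interF G _ _ _ _ _ _ _ ih =>
    exact G.forceSeq_fill_of_imp (fun _ => forceSeq_interF fc dc) x (ih x)
  | interD G _ _ _ _ _ _ _ _ ih =>
    exact G.forceSeq_fill_of_imp (fun _ => forceSeq_interD fc dc) x (ih x)
  | dRule _ _ _ hr => simp [hD] at hr
  | tBox _ _ _ _ hr | tDia _ _ _ _ hr => simp [hT] at hr
  | perm _ _ hST _ ih => exact (hST.forceSeq_iff x).mp (ih x)

/-- Soundness of the bi-nested calculus C_LIK: a provable sequent is forced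
at every world of every model based on a forward and downward confluent
frame. -/
theorem clik_soundness (S : Sequent)
    (h : Prf ⟨true, false, false⟩ S) :
    ∀ (W : Type) (M : Model W), Nonempty W →
      ForwardConfluent M → DownwardConfluent M →
      ∀ x : W, ForceSeq M x S :=
  fun _ _ _ fc dc => h.forceSeq fc dc rfl rfl
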